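/- For all integers s ≥ 2 and t with 1 ≤ t ≤ s−1, the function φ(s, t) = t·(ξ_s − ξ_t) + (s−t)·(ξ_s − ξ_{s−t}) is maximized at the balanced split: φ(s, t) ≤ φ(s, ⌊s/2⌋). Moreover φ is symmetric: φ(s, t) = φ(s, s−t). -/

import Mathlib

/-!
Since `(n + 1) ξ_{n+1} - n ξ_n = ξ_n + 1`, the increment `φ(s, t + 1) - φ(s, t)` telescopes to
`ξ_{s-t-1} - ξ_t`, which is nonnegative as long as `t < s - t`. So `φ(s, ·)` increases up to
`⌊s/2⌋`, and the symmetry `t ↔ s - t` moves every `t` into that range.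
-/

/-- The `n`-th harmonic number `ξ_n = Σ_{j=1}^n 1/j`. -/
noncomputable def xi (n : ℕ) : ℝ := ∑ j ∈ Finset.range n, (1 : ℝ) / (j + 1)

/-- `φ(s, t) = t·(ξ_s − ξ_t) + (s−t)·(ξ_s − ξ_{s−t})`. -/
noncomputable def phi (s t : ℕ) : ℝ :=
  (t : ℝ) * (xi s - xi t) + ((s : ℝ) - (t : ℝ)) * (xi s - xi (s - t))

lemma xi_succ (n : ℕ) : xi (n + 1) = xi n + 1 / (n + 1) := by
  simp [xi, Finset.sum_range_succ]

lemma xi_monotone : Monotone xi :=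
  monotone_nat_of_le_succ fun n => by
    rw [xi_succ]
    exact le_add_of_nonneg_right (by positivity)

lemma succ_mul_xi_succ (n : ℕ) : ((n : ℝ) + 1) * xi (n + 1) = n * xi n + xi n + 1 := by
  rw [xi_succ]
  field_simp

lemma phi_succ_sub_phi (t u : ℕ) :
    phi (t + u + 1) (t + 1) - phi (t + u + 1) t = xi u - xi t := by
  have hu : t + u + 1 - (t + 1) = u := by omega
  have hu' : t + u + 1 - t = u + 1 := by omega
  simp only [phi, hu, hu']
  push_cast
  linear_combination succ_mul_xi_succ u - succ_mul_xi_succ t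

lemma phi_sub_right {s t : ℕ} (h : t ≤ s) : phi s (s - t) = phi s t := by
  simp only [phi, Nat.sub_sub_self h, Nat.cast_sub h]
  ring

lemma monotoneOn_phi (s : ℕ) : MonotoneOn (phi s) (Set.Iic (s / 2)) := by
  refine monotoneOn_of_le_succ Set.ordConnected_Iic fun t _ _ ht => ?_
  rw [Order.succ_eq_add_one, Set.mem_Iic] at ht
  rw [Order.succ_eq_add_one]
  obtain ⟨u, rfl⟩ : ∃ u, s = t + u + 1 := ⟨s - t - 1, by omega⟩
  have htu : t ≤ u := by omega
  linarith [phi_succ_sub_phi t u, xi_monotone htu]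

theorem phi_max_at_balanced_and_symm_general (s t : ℕ)
    (hts : t ≤ s - 1) :
    phi s t ≤ phi s (s / 2) ∧ phi s t = phi s (s - t) := by
  have hle : t ≤ s := by omega
  have hhalf : s / 2 ∈ Set.Iic (s / 2) := Set.mem_Iic.2 le_rfl
  refine ⟨?_, (phi_sub_right hle).symm⟩
  rcases le_or_gt t (s / 2) with h | h
  · exact monotoneOn_phi s h hhalf h
  · rw [← phi_sub_right hle]
    exact monotoneOn_phi s (show s - t ≤ s / 2 by omega) hhalf (by omega)

/-- for integers `s ≥ 2` and `1 ≤ t ≤ s−1`, `φ(s, ·)` is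
maximized at the balanced split, `φ(s, t) ≤ φ(s, ⌊s/2⌋)`, and is symmetric:
`φ(s, t) = φ(s, s−t)`. -/
theorem phi_max_at_balanced_and_symm (s t : ℕ) (hs : 2 ≤ s) (ht1 : 1 ≤ t)
    (hts : t ≤ s - 1) :
    phi s t ≤ phi s (s / 2) ∧ phi s t = phi s (s - t) :=
  phi_max_at_balanced_and_symm_general s t hts
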